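/- Borel–Cantelli with Paley–Zygmund: let (A_n) be measurable sets in a probability space with Σ μ(A_n) = ∞, and suppose Σ_{m,n=1}^N μ(A_m ∩ A_n) ≤ C (Σ_{n=1}^N μ(A_n))² for all N and a fixed C > 0. Then μ(limsup A_n) ≥ 1/C. -/

import Mathlib

open MeasureTheory Filter ENNReal Topology

/-- Cauchy–Schwarz for the Lebesgue integral: if `f` vanishes off `U`, then
`(∫ f)² ≤ (∫ f²) * μ U`. -/
lemma lintegral_sq_le_of_support {Ω : Type*} [MeasurableSpace Ω] (μ : Measure Ω)
    {f : Ω → ℝ≥0∞} (hf : Measurable f) {U : Set Ω} (hU : MeasurableSet U)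
    (hsupp : ∀ ω ∉ U, f ω = 0) :
    (∫⁻ ω, f ω ∂μ) ^ 2 ≤ (∫⁻ ω, f ω ^ 2 ∂μ) * μ U := by
  have hfeq : ∀ ω, f ω = f ω * U.indicator 1 ω := by
    intro ω
    by_cases h : ω ∈ U
    · simp [Set.indicator_of_mem h]
    · simp [Set.indicator_of_notMem h, hsupp ω h]
  have hconj : (2 : ℝ).HolderConjugate 2 := Real.HolderConjugate.two_two
  have hCS := ENNReal.lintegral_mul_le_Lp_mul_Lq μ hconj hf.aemeasurable
    ((measurable_one.indicator hU).aemeasurable)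
  have hind : (∫⁻ ω, (U.indicator (1 : Ω → ℝ≥0∞) ω) ^ (2 : ℝ) ∂μ) = μ U := by
    have : ∀ ω, (U.indicator (1 : Ω → ℝ≥0∞) ω) ^ (2 : ℝ) = U.indicator 1 ω := by
      intro ω
      by_cases h : ω ∈ U
      · simp [Set.indicator_of_mem h]
      · simp [Set.indicator_of_notMem h]
    simp only [this]
    exact lintegral_indicator_one hU
  have hfrpow : ∀ ω, f ω ^ (2 : ℝ) = f ω ^ 2 := by
    intro ω
    rw [← ENNReal.rpow_natCast (f ω) 2]
    norm_num
  have key : (∫⁻ ω, f ω ∂μ)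
      ≤ (∫⁻ ω, f ω ^ 2 ∂μ) ^ (1 / (2:ℝ)) * (μ U) ^ (1 / (2:ℝ)) := by
    calc (∫⁻ ω, f ω ∂μ) = ∫⁻ ω, f ω * U.indicator 1 ω ∂μ := by
          simp only [← hfeq]
      _ ≤ (∫⁻ ω, f ω ^ (2:ℝ) ∂μ) ^ (1 / (2:ℝ))
          * (∫⁻ ω, (U.indicator (1 : Ω → ℝ≥0∞) ω) ^ (2:ℝ) ∂μ) ^ (1 / (2:ℝ)) := hCS
      _ = (∫⁻ ω, f ω ^ 2 ∂μ) ^ (1 / (2:ℝ)) * (μ U) ^ (1 / (2:ℝ)) := by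
          rw [hind]; simp only [hfrpow]
  calc (∫⁻ ω, f ω ∂μ) ^ 2
      ≤ ((∫⁻ ω, f ω ^ 2 ∂μ) ^ (1 / (2:ℝ)) * (μ U) ^ (1 / (2:ℝ))) ^ 2 :=
        pow_le_pow_left' key 2
    _ = (∫⁻ ω, f ω ^ 2 ∂μ) * μ U := by
        rw [mul_pow, ← ENNReal.rpow_natCast ((∫⁻ ω, f ω ^ 2 ∂μ) ^ (1 / (2:ℝ))) 2,
          ← ENNReal.rpow_natCast ((μ _ : ℝ≥0∞) ^ (1 / (2:ℝ))) 2,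
          ← ENNReal.rpow_mul, ← ENNReal.rpow_mul]
        norm_num

theorem borel_cantelli_paley_zygmund
    {Ω : Type*} [MeasurableSpace Ω] (μ : Measure Ω) [IsProbabilityMeasure μ]
    (A : ℕ → Set Ω) (hA : ∀ n, MeasurableSet (A n))
    (C : ℝ≥0∞) (hC : 1 ≤ C)
    (hdiv : ∑' n, μ (A n) = ⊤)
    (hquasi : ∀ N : ℕ,
      ∑ m ∈ Finset.range N, ∑ n ∈ Finset.range N, μ (A m ∩ A n)
        ≤ C * (∑ n ∈ Finset.range N, μ (A n)) ^ 2) :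
    C⁻¹ ≤ μ (limsup A atTop) := by
  rcases eq_top_or_lt_top C with hCtop | hCtop
  · simp [hCtop]
  have hCne : C ≠ ⊤ := hCtop.ne
  have hC0 : C ≠ 0 := by positivity
  -- notation
  set b : ℕ → ℝ≥0∞ := fun M => ∑ n ∈ Finset.range M, μ (A n) with hb
  have hbfin : ∀ M, b M ≠ ⊤ := by
    intro M
    exact (ENNReal.sum_lt_top.2 (fun n _ => measure_lt_top μ (A n))).ne
  have hbtop : Tendsto b atTop (𝓝 ⊤) := by
    rw [← hdiv]; exact ENNReal.tendsto_nat_tsum _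
  -- the tail unions
  set U : ℕ → Set Ω := fun N => ⋃ i, ⋃ (_ : N ≤ i), A i with hU
  have hUm : ∀ N, MeasurableSet (U N) :=
    fun N => MeasurableSet.iUnion fun i => MeasurableSet.iUnion fun _ => hA i
  have hUanti : Antitone U := by
    intro N M hNM
    exact Set.iUnion₂_mono' fun i hi => ⟨i, hNM.trans hi, subset_rfl⟩
  -- key estimate for each N, M
  have key : ∀ N M : ℕ,
      (∑ n ∈ Finset.Ico N M, μ (A n)) ^ 2 / (C * b M ^ 2) ≤ μ (U N) := by
    intro N M
    set S : Ω → ℝ≥0∞ := fun ω => ∑ n ∈ Finset.Ico N M, (A n).indicator 1 ω with hS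
    have hSm : Measurable S :=
      Finset.measurable_sum _ fun n _ => measurable_one.indicator (hA n)
    have hsupp : ∀ ω ∉ U N, S ω = 0 := by
      intro ω hω
      refine Finset.sum_eq_zero fun n hn => ?_
      rw [Finset.mem_Ico] at hn
      apply Set.indicator_of_notMem
      intro hmem
      exact hω (Set.mem_iUnion₂.2 ⟨n, hn.1, hmem⟩)
    have hint1 : (∫⁻ ω, S ω ∂μ) = ∑ n ∈ Finset.Ico N M, μ (A n) := by
      rw [hS, lintegral_finset_sum _ fun n _ => measurable_one.indicator (hA n)]
      exact Finset.sum_congr rfl fun n _ => lintegral_indicator_one (hA n)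
    have hint2 : (∫⁻ ω, S ω ^ 2 ∂μ)
        = ∑ m ∈ Finset.Ico N M, ∑ n ∈ Finset.Ico N M, μ (A m ∩ A n) := by
      have hsq : ∀ ω, S ω ^ 2
          = ∑ m ∈ Finset.Ico N M, ∑ n ∈ Finset.Ico N M, (A m ∩ A n).indicator 1 ω := by
        intro ω
        rw [hS, sq, Finset.sum_mul_sum]
        refine Finset.sum_congr rfl fun m _ => Finset.sum_congr rfl fun n _ => ?_
        rw [Set.inter_indicator_one]
        rfl
      simp only [hsq]
      rw [lintegral_finset_sum _ fun m _ => Finset.measurable_sum _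
        fun n _ => measurable_one.indicator ((hA m).inter (hA n))]
      refine Finset.sum_congr rfl fun m _ => ?_
      rw [lintegral_finset_sum _ fun n _ => measurable_one.indicator ((hA m).inter (hA n))]
      exact Finset.sum_congr rfl fun n _ => lintegral_indicator_one ((hA m).inter (hA n))
    have hCS := lintegral_sq_le_of_support μ hSm (hUm N) hsupp
    rw [hint1, hint2] at hCS
    have hdouble : ∑ m ∈ Finset.Ico N M, ∑ n ∈ Finset.Ico N M, μ (A m ∩ A n)
        ≤ C * b M ^ 2 := by
      have hsub : Finset.Ico N M ⊆ Finset.range M :=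
        fun x hx => Finset.mem_range.2 ((Finset.mem_Ico.1 hx).2)
      calc ∑ m ∈ Finset.Ico N M, ∑ n ∈ Finset.Ico N M, μ (A m ∩ A n)
          ≤ ∑ m ∈ Finset.Ico N M, ∑ n ∈ Finset.range M, μ (A m ∩ A n) :=
            Finset.sum_le_sum fun m _ => Finset.sum_le_sum_of_subset hsub
        _ ≤ ∑ m ∈ Finset.range M, ∑ n ∈ Finset.range M, μ (A m ∩ A n) :=
            Finset.sum_le_sum_of_subset hsub
        _ ≤ C * b M ^ 2 := hquasi M
    have : (∑ n ∈ Finset.Ico N M, μ (A n)) ^ 2 ≤ μ (U N) * (C * b M ^ 2) := by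
      calc (∑ n ∈ Finset.Ico N M, μ (A n)) ^ 2
          ≤ (∑ m ∈ Finset.Ico N M, ∑ n ∈ Finset.Ico N M, μ (A m ∩ A n)) * μ (U N) := hCS
        _ ≤ (C * b M ^ 2) * μ (U N) := mul_le_mul_left hdouble _
        _ = μ (U N) * (C * b M ^ 2) := mul_comm _ _
    exact ENNReal.div_le_of_le_mul this
  -- the ratio tends to C⁻¹
  have hratio : ∀ N : ℕ, Tendsto
      (fun M => (∑ n ∈ Finset.Ico N M, μ (A n)) ^ 2 / (C * b M ^ 2)) atTop (𝓝 C⁻¹) := by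
    intro N
    set c : ℝ≥0∞ := b N with hc
    have hcne : c ≠ ⊤ := hbfin N
    -- rewrite as ((a M)/(b M))^2 * C⁻¹
    have hrw : ∀ M : ℕ,
        (∑ n ∈ Finset.Ico N M, μ (A n)) ^ 2 / (C * b M ^ 2)
        = ((∑ n ∈ Finset.Ico N M, μ (A n)) / b M) ^ 2 * C⁻¹ := by
      intro M
      rw [div_eq_mul_inv, ENNReal.mul_inv (Or.inl hC0) (Or.inl hCne), div_eq_mul_inv, mul_pow,
        ENNReal.inv_pow]
      ring
    simp only [hrw]
    have h1 : Tendsto (fun M => (∑ n ∈ Finset.Ico N M, μ (A n)) / b M) atTop (𝓝 1) := by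
      have hub : ∀ M, (∑ n ∈ Finset.Ico N M, μ (A n)) / b M ≤ 1 := by
        intro M
        apply ENNReal.div_le_of_le_mul
        rw [one_mul]
        exact Finset.sum_le_sum_of_subset fun x hx =>
          Finset.mem_range.2 ((Finset.mem_Ico.1 hx).2)
      have hlb : ∀ M ≥ N, b M ≠ 0 → 1 - c / b M ≤ (∑ n ∈ Finset.Ico N M, μ (A n)) / b M := by
        intro M hM hbz
        have hsplit : b M = c + ∑ n ∈ Finset.Ico N M, μ (A n) := by
          rw [hc, hb]
          exact (Finset.sum_range_add_sum_Ico _ hM).symm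
        have : b M - c ≤ ∑ n ∈ Finset.Ico N M, μ (A n) := by
          rw [hsplit]; exact tsub_le_iff_left.2 le_rfl
        refine le_trans ?_ (ENNReal.div_le_div_right this _)
        rw [ENNReal.sub_div fun _ _ => hbz, ENNReal.div_self hbz (hbfin M)]
      have hlb_tendsto : Tendsto (fun M => 1 - c / b M) atTop (𝓝 1) := by
        have hdiv0 : Tendsto (fun M => c / b M) atTop (𝓝 0) := by
          simp only [div_eq_mul_inv]
          have h1 : Tendsto (fun M => (b M)⁻¹) atTop (𝓝 ⊤⁻¹) := ENNReal.tendsto_inv_iff.2 hbtop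
          rw [ENNReal.inv_top] at h1
          simpa using ENNReal.Tendsto.const_mul h1 (Or.inr hcne)
        have := ENNReal.Tendsto.sub (tendsto_const_nhds (x := (1 : ℝ≥0∞))) hdiv0
          (Or.inl one_ne_top)
        simpa using this
      refine tendsto_of_tendsto_of_tendsto_of_le_of_le' hlb_tendsto tendsto_const_nhds ?_ ?_
      · have hev : ∀ᶠ M in atTop, (1:ℝ≥0∞) ≤ b M :=
          hbtop.eventually (eventually_ge_nhds (by norm_num))
        filter_upwards [eventually_ge_atTop N, hev] with M hM hM1
        exact hlb M hM (by intro h; rw [h] at hM1; exact (by norm_num : ¬((1:ℝ≥0∞) ≤ 0)) hM1)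
      · filter_upwards with M using hub M
    have h2 : Tendsto (fun M => ((∑ n ∈ Finset.Ico N M, μ (A n)) / b M) ^ 2) atTop
        (𝓝 1) := by
      have := (ENNReal.continuous_pow 2).continuousAt.tendsto.comp h1
      simpa [Function.comp_def] using this
    have h3 := ENNReal.Tendsto.mul_const h2 (b := C⁻¹) (Or.inl one_ne_zero)
    simpa using h3
  -- conclude
  have hUN : ∀ N, C⁻¹ ≤ μ (U N) := fun N =>
    le_of_tendsto (hratio N) (Eventually.of_forall fun M => key N M)
  have hlimsup : limsup A atTop = ⋂ N, U N := by
    rw [limsup_eq_iInf_iSup_of_nat]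
    simp only [hU]
    rfl
  rw [hlimsup, Antitone.measure_iInter hUanti (fun N => (hUm N).nullMeasurableSet)
    ⟨0, measure_ne_top μ _⟩]
  exact le_iInf hUN
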